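/- arXiv:2002.06724 — 9 statements merged into one kernel-verified Lean document; each statement's English description precedes it below -/
import Mathlib

section
/- Let N be a natural number, let J : Fin N → ℝ² be injective, let θ : Fin N → Fin N → ℝ satisfy θ i j ≥ 0, θ i j = θ j i and θ i i = 0 for all i, j, let x ∈ ℝ², and let B ⊆ Fin N. Assume that for every index j ∉ B the radial stationarity condition Σᵢ θ i j · ⟪(J j − J i)/‖J j − J i‖, J j − x⟫ = 0 holds (the term for i = j being 0). Then (1/2)·Σᵢ Σⱼ θ i j · ‖J j − J i‖ = Σ_{l ∈ B} ⟪Σᵢ θ i l · (J l − J i)/‖J l − J i‖, J l − x⟫. -/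
/-!
Each segment `[J i, J j]` contributes `θ i j * ⟪u, J j - x⟫ + θ i j * ⟪-u, J i - x⟫` to the
radial sums at its two endpoints, where `u` is its unit direction from `J i` to `J j`; this equals
`θ i j * ⟪u, J j - J i⟫ = θ i j * ‖J j - J i‖`, independently of `x`. Summing over all ordered pairs
counts every segment twice, and the radial sums at interior junctions vanish by stationarity.
-/

open scoped RealInnerProductSpace

section

variable {E : Type*} [NormedAddCommGroup E] [InnerProductSpace ℝ E]

theorem inner_normalize_sub_add_inner_normalize_sub (v w x : E) :
    ⟪‖w - v‖⁻¹ • (w - v), w - x⟫ + ⟪‖v - w‖⁻¹ • (v - w), v - x⟫ = ‖w - v‖ := by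
  rw [← neg_sub w v, norm_neg, smul_neg, inner_neg_left, ← sub_eq_add_neg, ← inner_sub_right,
    sub_sub_sub_cancel_right, real_inner_smul_left, real_inner_self_eq_norm_sq]
  by_cases h : ‖w - v‖ = 0
  · simp [h]
  · field_simp

variable {ι : Type*} [Fintype ι]

theorem half_sum_mul_norm_sub_eq_sum_sum_inner (J : ι → E) (θ : ι → ι → ℝ)
    (hθ : ∀ i j, θ i j = θ j i) (x : E) :
    (1 / 2) * ∑ i, ∑ j, θ i j * ‖J j - J i‖ =
      ∑ j, ∑ i, θ i j * ⟪‖J j - J i‖⁻¹ • (J j - J i), J j - x⟫ := by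
  set a : ι → ι → ℝ := fun i j => θ i j * ⟪‖J j - J i‖⁻¹ • (J j - J i), J j - x⟫
  have hpair : ∀ i j, θ i j * ‖J j - J i‖ = a i j + a j i := fun i j => by
    simp only [a, hθ j i, ← mul_add, inner_normalize_sub_add_inner_normalize_sub]
  have hswap : ∑ i, ∑ j, a i j = ∑ i, ∑ j, a j i := Finset.sum_comm
  simp only [hpair, Finset.sum_add_distrib, hswap]
  ring

end

theorem mass_formula_generalized_geodesic_network_general
    (N : ℕ) (J : Fin N → EuclideanSpace ℝ (Fin 2))
    (θ : Fin N → Fin N → ℝ)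
    (hθsymm : ∀ i j, θ i j = θ j i)
    (x : EuclideanSpace ℝ (Fin 2))
    (B : Finset (Fin N))
    (hstat : ∀ j ∉ B,
      ∑ i, θ i j * ⟪(‖J j - J i‖)⁻¹ • (J j - J i), J j - x⟫ = 0) :
    (1/2) * ∑ i, ∑ j, θ i j * ‖J j - J i‖ =
      ∑ l ∈ B, ⟪∑ i, θ i l • ((‖J l - J i‖)⁻¹ • (J l - J i)), J l - x⟫ := by
  rw [half_sum_mul_norm_sub_eq_sum_sum_inner J θ hθsymm x,
    ← Finset.sum_subset (Finset.subset_univ B) fun j _ hj => hstat j hj]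
  refine Finset.sum_congr rfl fun l _ => ?_
  simp only [sum_inner, real_inner_smul_left]

/-- The mass formula for a generalized finite geodesic network satisfying the radial
stationarity condition at every interior junction (junctions not in `B`). -/
theorem mass_formula_generalized_geodesic_network
    (N : ℕ) (J : Fin N → EuclideanSpace ℝ (Fin 2))
    (hJ : Function.Injective J)
    (θ : Fin N → Fin N → ℝ)
    (hθnn : ∀ i j, 0 ≤ θ i j)
    (hθsymm : ∀ i j, θ i j = θ j i)
    (hθdiag : ∀ i, θ i i = 0)
    (x : EuclideanSpace ℝ (Fin 2))
    (B : Finset (Fin N))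
    (hstat : ∀ j ∉ B,
      ∑ i, θ i j * ⟪(‖J j - J i‖)⁻¹ • (J j - J i), J j - x⟫ = 0) :
    (1/2) * ∑ i, ∑ j, θ i j * ‖J j - J i‖ =
      ∑ l ∈ B, ⟪∑ i, θ i l • ((‖J l - J i‖)⁻¹ • (J l - J i)), J l - x⟫ :=
  mass_formula_generalized_geodesic_network_general N J θ hθsymm x B hstat
end

section
/- Let (N, J, θ) be a free boundary geodesic network in the closed unit disk B̄₁ and let μ > 0 be a real number such that its mass (1/2)·Σᵢ Σⱼ (θ i j : ℝ)·‖J i − J j‖ is at most μ. Then for every junction j with ‖J j‖ < 1 one has Σᵢ θ i j ≤ μ; equivalently, the one-dimensional density (1/2)·Σᵢ θ i j of the network at the interior junction J j is at most μ/2. -/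
open scoped RealInnerProductSpace BigOperators

/-!
Test the network against the unit radial field `X p = (p - J j) / ‖p - J j‖` centred at the
junction `J j`. The first variation of mass along a field `Y` is
`δM(Y) = ½ ∑ θ a b ⟪u a b, Y a - Y b⟫` with `u a b` the unit vector from `J b` to `J a`.
Since `p ↦ p / ‖p‖` is monotone, every segment contributes nonnegatively to `δM(X)`, and the
segments at `J j` contribute exactly their multiplicities, so `δM(X) ≥ ∑ a, θ a j`.
Summing by parts, `δM(Y) = -∑ b, ⟪F b, Y b⟫` where `F b` is the tension at `J b`; it vanishes
at interior junctions and points inwards along `-J b` at boundary ones, so among fields of norm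
at most `1` the identity field `Y = J` maximises `δM`, and `δM(J)` is the mass.
-/

namespace SegmentNetwork

variable {ι E : Type*} [Fintype ι] [NormedAddCommGroup E] [InnerProductSpace ℝ E]

noncomputable def unitVec (v : E) : E := ‖v‖⁻¹ • v

@[simp]
lemma unitVec_zero : unitVec (0 : E) = 0 := by
  simp [unitVec]

lemma unitVec_neg (v : E) : unitVec (-v) = -unitVec v := by
  simp [unitVec]

lemma norm_unitVec_le (v : E) : ‖unitVec v‖ ≤ 1 := by
  rcases eq_or_ne v 0 with rfl | hv
  · simp [unitVec]
  · simp [unitVec, norm_smul, hv]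

lemma norm_unitVec {v : E} (hv : v ≠ 0) : ‖unitVec v‖ = 1 := by
  simp [unitVec, norm_smul, hv]

lemma inner_unitVec_self (v : E) : ⟪unitVec v, v⟫ = ‖v‖ := by
  rcases eq_or_ne v 0 with rfl | hv
  · simp [unitVec]
  · rw [unitVec, real_inner_smul_left, real_inner_self_eq_norm_sq]
    field_simp

/-- Monotonicity of `unitVec`, the gradient of the convex function `‖·‖`. -/
lemma inner_sub_unitVec_sub_nonneg (a b : E) : 0 ≤ ⟪a - b, unitVec a - unitVec b⟫ := by
  have ha := real_inner_le_norm a (unitVec b)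
  have hb := real_inner_le_norm b (unitVec a)
  have hua := mul_le_of_le_one_right (norm_nonneg a) (norm_unitVec_le b)
  have hub := mul_le_of_le_one_right (norm_nonneg b) (norm_unitVec_le a)
  have hsa : ⟪a, unitVec a⟫ = ‖a‖ := by rw [real_inner_comm, inner_unitVec_self]
  have hsb : ⟪b, unitVec b⟫ = ‖b‖ := by rw [real_inner_comm, inner_unitVec_self]
  simp only [inner_sub_left, inner_sub_right, hsa, hsb]
  linarith

lemma inner_unitVec_sub_nonneg (a b : E) : 0 ≤ ⟪unitVec (a - b), unitVec a - unitVec b⟫ := by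
  rw [unitVec, real_inner_smul_left]
  exact mul_nonneg (inv_nonneg.2 (norm_nonneg _)) (inner_sub_unitVec_sub_nonneg a b)

lemma inner_sub_self_nonpos {x y : E} (h : ‖x‖ ≤ ‖y‖) : ⟪x - y, y⟫ ≤ 0 := by
  have := real_inner_le_norm x y
  rw [inner_sub_left, real_inner_self_eq_norm_sq]
  nlinarith [norm_nonneg y]

lemma inner_smul_self_le_inner_smul {c : ℝ} {y z : E} (hc : c ≤ 0) (h : ‖z‖ ≤ ‖y‖) :
    ⟪c • y, y⟫ ≤ ⟪c • y, z⟫ := by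
  have := real_inner_le_norm y z
  rw [real_inner_smul_left, real_inner_smul_left, real_inner_self_eq_norm_sq]
  nlinarith [mul_le_mul_of_nonneg_left h (norm_nonneg y)]

lemma sum_apply_add_sum_le_sum_sum {g : ι → ι → ℝ} (hg : ∀ a b, 0 ≤ g a b) (j : ι) :
    ∑ a, g a j + ∑ b, g j b ≤ ∑ a, ∑ b, g a b + g j j := by
  classical
  rw [← Finset.add_sum_erase _ (fun a => g a j) (Finset.mem_univ j),
    ← Finset.add_sum_erase _ (fun a => ∑ b, g a b) (Finset.mem_univ j)]
  have : ∑ a ∈ Finset.univ.erase j, g a j ≤ ∑ a ∈ Finset.univ.erase j, ∑ b, g a b :=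
    Finset.sum_le_sum fun a _ => Finset.single_le_sum (fun b _ => hg a b) (Finset.mem_univ j)
  linarith

variable (J : ι → E) (θ : ι → ι → ℕ)

noncomputable def mass : ℝ := (1/2) * ∑ a, ∑ b, (θ a b : ℝ) * ‖J a - J b‖

noncomputable def tension (b : ι) : E := ∑ a, (θ a b : ℝ) • unitVec (J a - J b)

/-- The first variation of `mass` along the vector field taking the value `Y a` at `J a`. -/
noncomputable def firstVariation (Y : ι → E) : ℝ :=
  (1/2) * ∑ a, ∑ b, (θ a b : ℝ) * ⟪unitVec (J a - J b), Y a - Y b⟫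

lemma firstVariation_self : firstVariation J θ J = mass J θ := by
  simp only [firstVariation, mass, inner_unitVec_self]

variable {J θ}

lemma firstVariation_eq_neg_sum_inner_tension (hθ : ∀ a b, θ a b = θ b a) (Y : ι → E) :
    firstVariation J θ Y = -∑ b, ⟪tension J θ b, Y b⟫ := by
  have hswap : ∑ a, ∑ b, (θ a b : ℝ) * ⟪unitVec (J a - J b), Y a⟫
      = -∑ a, ∑ b, (θ a b : ℝ) * ⟪unitVec (J a - J b), Y b⟫ := by
    rw [Finset.sum_comm, ← Finset.sum_neg_distrib]
    refine Finset.sum_congr rfl fun b _ => ?_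
    rw [← Finset.sum_neg_distrib]
    refine Finset.sum_congr rfl fun a _ => ?_
    rw [hθ, ← neg_sub (J a), unitVec_neg, inner_neg_left]
    ring
  simp only [tension, sum_inner, real_inner_smul_left]
  rw [Finset.sum_comm (f := fun b a => (θ a b : ℝ) * _)]
  simp only [firstVariation, inner_sub_right, mul_sub, Finset.sum_sub_distrib, hswap]
  ring

lemma firstVariation_radial_ge (hJ : Function.Injective J) (hθ : ∀ a b, θ a b = θ b a)
    (hθ₀ : ∀ a, θ a a = 0) (j : ι) :
    ∑ a, (θ a j : ℝ) ≤ firstVariation J θ (fun b => unitVec (J b - J j)) := by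
  set X := fun b => unitVec (J b - J j)
  set g := fun a b => (θ a b : ℝ) * ⟪unitVec (J a - J b), X a - X b⟫
  have hg : ∀ a b, 0 ≤ g a b := fun a b => mul_nonneg (Nat.cast_nonneg _) <| by
    simpa only [sub_sub_sub_cancel_right] using inner_unitVec_sub_nonneg (J a - J j) (J b - J j)
  have hXj : X j = 0 := by simp [X]
  have hcol : ∀ a, g a j = θ a j := by
    intro a
    rcases eq_or_ne a j with rfl | ha
    · simp [g, hθ₀]
    · simp [g, X, norm_unitVec (sub_ne_zero.2 (hJ.ne ha))]
  have hrow : ∀ b, g j b = θ b j := by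
    intro b
    rw [← hcol b]
    simp only [g, hθ j b, hXj, X, ← neg_sub (J b) (J j), unitVec_neg, zero_sub, sub_zero,
      inner_neg_neg]
  have := sum_apply_add_sum_le_sum_sum hg j
  simp only [hcol, hrow, hθ₀, Nat.cast_zero] at this
  rw [firstVariation]
  linarith

lemma inner_tension_self_nonpos {b : ι} (h : ∀ a, ‖J a‖ ≤ ‖J b‖) :
    ⟪tension J θ b, J b⟫ ≤ 0 := by
  rw [tension, sum_inner]
  refine Finset.sum_nonpos fun a _ => ?_
  rw [real_inner_smul_left, unitVec, real_inner_smul_left]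
  exact mul_nonpos_of_nonneg_of_nonpos (Nat.cast_nonneg _)
    (mul_nonpos_of_nonneg_of_nonpos (inv_nonneg.2 (norm_nonneg _)) (inner_sub_self_nonpos (h a)))

lemma firstVariation_le_mass (hθ : ∀ a b, θ a b = θ b a) (hball : ∀ a, ‖J a‖ ≤ 1)
    (hint : ∀ b, ‖J b‖ < 1 → tension J θ b = 0)
    (hbdry : ∀ b, ‖J b‖ = 1 → ∃ c : ℝ, tension J θ b = c • J b)
    {Y : ι → E} (hY : ∀ a, ‖Y a‖ ≤ 1) :
    firstVariation J θ Y ≤ mass J θ := by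
  rw [← firstVariation_self, firstVariation_eq_neg_sum_inner_tension hθ,
    firstVariation_eq_neg_sum_inner_tension hθ, neg_le_neg_iff]
  refine Finset.sum_le_sum fun b _ => ?_
  rcases (hball b).lt_or_eq with hb | hb
  · simp [hint b hb]
  · obtain ⟨c, hc⟩ := hbdry b hb
    have hc₀ : c ≤ 0 := by
      have := inner_tension_self_nonpos (θ := θ) fun a => hb ▸ hball a
      rwa [hc, real_inner_smul_left, real_inner_self_eq_norm_sq, hb, one_pow, mul_one] at this
    rw [hc]
    exact inner_smul_self_le_inner_smul hc₀ (hb ▸ hY b)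

end SegmentNetwork

theorem density_bound_interior_junction_general
    (N : ℕ) (J : Fin N → EuclideanSpace ℝ (Fin 2))
    (hJ : Function.Injective J)
    (θ : Fin N → Fin N → ℕ)
    (hθsymm : ∀ i j, θ i j = θ j i)
    (hθdiag : ∀ i, θ i i = 0)
    (hball : ∀ i, ‖J i‖ ≤ 1)
    (hint : ∀ j, ‖J j‖ < 1 →
      ∑ i, (θ i j : ℝ) • ((‖J i - J j‖)⁻¹ • (J i - J j)) = 0)
    (hbdry : ∀ l, ‖J l‖ = 1 → ∃ c : ℝ,
      ∑ i, (θ i l : ℝ) • ((‖J i - J l‖)⁻¹ • (J i - J l)) = c • J l)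
    (μ : ℝ)
    (hmass : (1/2) * ∑ i, ∑ j, (θ i j : ℝ) * ‖J i - J j‖ ≤ μ) :
    ∀ j, ‖J j‖ < 1 → (∑ i, (θ i j : ℝ)) ≤ μ := by
  intro j _
  calc ∑ i, (θ i j : ℝ)
      ≤ SegmentNetwork.firstVariation J θ (fun b => SegmentNetwork.unitVec (J b - J j)) :=
        SegmentNetwork.firstVariation_radial_ge hJ hθsymm hθdiag j
    _ ≤ SegmentNetwork.mass J θ :=
        SegmentNetwork.firstVariation_le_mass hθsymm hball hint hbdry
          fun _ => SegmentNetwork.norm_unitVec_le _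
    _ ≤ μ := hmass

/-- Upper bound for the density at interior junctions of a free boundary geodesic
network of mass at most `μ` in the closed unit disk. -/
theorem density_bound_interior_junction
    (N : ℕ) (J : Fin N → EuclideanSpace ℝ (Fin 2))
    (hJ : Function.Injective J)
    (θ : Fin N → Fin N → ℕ)
    (hθsymm : ∀ i j, θ i j = θ j i)
    (hθdiag : ∀ i, θ i i = 0)
    (hball : ∀ i, ‖J i‖ ≤ 1)
    (hint : ∀ j, ‖J j‖ < 1 →
      ∑ i, (θ i j : ℝ) • ((‖J i - J j‖)⁻¹ • (J i - J j)) = 0)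
    (hbdry : ∀ l, ‖J l‖ = 1 → ∃ c : ℝ,
      ∑ i, (θ i l : ℝ) • ((‖J i - J l‖)⁻¹ • (J i - J l)) = c • J l)
    (μ : ℝ) (hμ : 0 < μ)
    (hmass : (1/2) * ∑ i, ∑ j, (θ i j : ℝ) * ‖J i - J j‖ ≤ μ) :
    ∀ j, ‖J j‖ < 1 → (∑ i, (θ i j : ℝ)) ≤ μ :=
  density_bound_interior_junction_general N J hJ θ hθsymm hθdiag hball hint hbdry μ hmass
end

section
/- Let m ≥ 3 be a natural number, let v : Fin m → ℝ² be injective with ‖v k‖ = 1 for all k, and let θ : Fin m → ℕ satisfy θ k ≥ 1 for all k, Σₖ (θ k : ℝ) • v k = 0, and Σₖ θ k ≤ 4. Then either m = 3 and θ k = 1 for all k (a triple junction), or m = 4, θ k = 1 for all k, and the vectors form two antipodal pairs, i.e. for every k there exists k' with v k' = −v k (a regular junction with multiplicity one). -/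
/-!
Since every multiplicity is at least one, there are at most four directions. With three
directions the only alternative to multiplicities `1, 1, 1` is `2, 1, 1`, i.e. `2x + y + z = 0`;
then `‖y + z‖ = ‖y‖ + ‖z‖`, so `y = z` by strict convexity. With four directions all
multiplicities are one and `a + b + c + d = 0`. Unless `b = -a`, the vector `s = a + b = -c - d`
is nonzero, and both `a - b` and `d - c` are orthogonal to `s` and have the same length; in the
plane this forces `a - b = ±(d - c)`, hence `a = -c` or `a = -d`.
-/

open Module
open scoped RealInnerProductSpace

section Plane

variable {E : Type*} [NormedAddCommGroup E] [InnerProductSpace ℝ E] [Fact (finrank ℝ E = 2)]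

theorem eq_or_eq_neg_of_inner_eq_zero_of_norm_eq {s u w : E} (hs : s ≠ 0)
    (hu : ⟪s, u⟫ = 0) (hw : ⟪s, w⟫ = 0) (h : ‖u‖ = ‖w‖) : u = w ∨ u = -w := by
  by_cases hw0 : w = 0
  · left
    rw [hw0, norm_zero, norm_eq_zero] at h
    rw [h, hw0]
  obtain ⟨c, rfl⟩ := Submodule.mem_span_singleton.mp
    (Submodule.mem_span_singleton_of_inner_eq_zero_of_inner_eq_zero hs hw0 hu hw)
  have hc : |c| = 1 := by
    rw [norm_smul, Real.norm_eq_abs] at h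
    exact (mul_eq_right₀ (norm_ne_zero_iff.mpr hw0)).mp h
  rcases abs_eq zero_le_one |>.mp hc with rfl | rfl <;> simp

theorem eq_or_eq_of_add_eq_add {x y x' y' : E} {r : ℝ} (hx : ‖x‖ = r) (hy : ‖y‖ = r)
    (hx' : ‖x'‖ = r) (hy' : ‖y'‖ = r) (h : x + y = x' + y') (hs : x + y ≠ 0) :
    x = x' ∨ x = y' := by
  have horth : ⟪x + y, x - y⟫ = 0 := (real_inner_add_sub_eq_zero_iff x y).mpr (hx.trans hy.symm)
  have horth' : ⟪x + y, x' - y'⟫ = 0 := by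
    rw [h]; exact (real_inner_add_sub_eq_zero_iff x' y').mpr (hx'.trans hy'.symm)
  have hnorm : ‖x - y‖ = ‖x' - y'‖ := by
    have hpar := parallelogram_law_with_norm ℝ x y
    have hpar' := parallelogram_law_with_norm ℝ x' y'
    rw [hx, hy] at hpar
    rw [← h, hx', hy'] at hpar'
    have hsq : ‖x - y‖ ^ 2 = ‖x' - y'‖ ^ 2 := by linarith
    exact (sq_eq_sq₀ (norm_nonneg _) (norm_nonneg _)).mp hsq
  rcases eq_or_eq_neg_of_inner_eq_zero_of_norm_eq hs horth horth' hnorm with hd | hd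
  · left
    have h2 : (2 : ℝ) • x = (2 : ℝ) • x' := by
      linear_combination (norm := module) h + hd
    exact smul_right_injective E two_ne_zero h2
  · right
    have h2 : (2 : ℝ) • x = (2 : ℝ) • y' := by
      linear_combination (norm := module) h + hd
    exact smul_right_injective E two_ne_zero h2

theorem neg_eq_of_add_add_add_eq_zero {a b c d : E} {r : ℝ} (ha : ‖a‖ = r) (hb : ‖b‖ = r)
    (hc : ‖c‖ = r) (hd : ‖d‖ = r) (h : a + b + c + d = 0) : b = -a ∨ c = -a ∨ d = -a := by
  by_cases hab : a + b = 0
  · exact Or.inl (eq_neg_of_add_eq_zero_right hab)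
  have hcd : a + b = -c + -d := by linear_combination (norm := module) h
  rcases eq_or_eq_of_add_eq_add ha hb (by rwa [norm_neg]) (by rwa [norm_neg]) hcd hab with h' | h'
  · exact Or.inr (Or.inl (neg_eq_iff_eq_neg.mp h'.symm))
  · exact Or.inr (Or.inr (neg_eq_iff_eq_neg.mp h'.symm))

theorem exists_eq_neg_of_sum_fin_four_eq_zero {v : Fin 4 → E} {r : ℝ} (hnorm : ∀ k, ‖v k‖ = r)
    (hstat : ∑ k, v k = 0) (k : Fin 4) : ∃ k', v k' = -v k := by
  rw [Fin.sum_univ_succAbove _ k, Fin.sum_univ_three, ← add_assoc, ← add_assoc] at hstat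
  rcases neg_eq_of_add_add_add_eq_zero (hnorm _) (hnorm _) (hnorm _) (hnorm _) hstat
    with h | h | h <;> exact ⟨_, h⟩

end Plane

theorem multiplicity_eq_one_of_fin_three {E : Type*} [NormedAddCommGroup E] [NormedSpace ℝ E]
    [StrictConvexSpace ℝ E] {v : Fin 3 → E} (hv : Function.Injective v) {r : ℝ}
    (hnorm : ∀ k, ‖v k‖ = r) {θ : Fin 3 → ℕ} (hθ : ∀ k, 1 ≤ θ k)
    (hstat : ∑ k, (θ k : ℝ) • v k = 0) (hsum : ∑ k, θ k ≤ 4) (k : Fin 3) : θ k = 1 := by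
  rw [Fin.sum_univ_succAbove _ k, Fin.sum_univ_two] at hsum hstat
  set i := k.succAbove 0
  set j := k.succAbove 1
  have hi := hθ i
  have hj := hθ j
  by_contra hk
  obtain ⟨hθk, hθi, hθj⟩ : θ k = 2 ∧ θ i = 1 ∧ θ j = 1 := by have := hθ k; omega
  simp only [hθk, hθi, hθj, Nat.cast_ofNat, Nat.cast_one, one_smul] at hstat
  have hsum_ij : v i + v j = -((2 : ℝ) • v k) := by linear_combination (norm := module) hstat
  have hnorm_ij : ‖v i + v j‖ = ‖v i‖ + ‖v j‖ := by
    rw [hsum_ij, norm_neg, norm_smul, hnorm, hnorm, hnorm, Real.norm_two]; ring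
  have hij : i = j := hv (eq_of_norm_eq_of_norm_add_eq (by rw [hnorm, hnorm]) hnorm_ij)
  exact absurd (Fin.succAbove_right_injective hij) (by decide)

theorem eq_one_of_one_le_of_sum_le_card {ι : Type*} [Fintype ι] {θ : ι → ℕ}
    (hθ : ∀ k, 1 ≤ θ k) (hsum : ∑ k, θ k ≤ Fintype.card ι) (k : ι) : θ k = 1 := by
  have hsum_eq : ∑ _k : ι, 1 = ∑ k, θ k :=
    le_antisymm (Finset.sum_le_sum fun k _ => hθ k) (by simpa using hsum)
  exact ((Finset.sum_eq_sum_iff_of_le fun k _ => hθ k).mp hsum_eq k (Finset.mem_univ k)).symm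

/-- Classification of stationary junctions of density at most `2` in the plane:
either a triple junction, or a regular junction consisting of two antipodal pairs
of unit vectors with multiplicity one. -/
theorem junction_classification
    (m : ℕ) (hm : 3 ≤ m)
    (v : Fin m → EuclideanSpace ℝ (Fin 2)) (hv : Function.Injective v)
    (hnorm : ∀ k, ‖v k‖ = 1)
    (θ : Fin m → ℕ) (hθ : ∀ k, 1 ≤ θ k)
    (hstat : ∑ k, (θ k : ℝ) • v k = 0)
    (hsum : ∑ k, θ k ≤ 4) :
    (m = 3 ∧ ∀ k, θ k = 1) ∨
      (m = 4 ∧ (∀ k, θ k = 1) ∧ ∀ k, ∃ k', v k' = -v k) := by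
  have hm4 : m ≤ 4 := by
    have := Finset.card_nsmul_le_sum Finset.univ θ 1 fun k _ => hθ k
    simp only [Finset.card_univ, Fintype.card_fin, smul_eq_mul, mul_one] at this
    exact this.trans hsum
  obtain rfl | rfl : m = 3 ∨ m = 4 := by omega
  · exact Or.inl ⟨rfl, multiplicity_eq_one_of_fin_three hv hnorm hθ hstat hsum⟩
  · have hθ1 := eq_one_of_one_le_of_sum_le_card hθ (by simpa using hsum)
    simp only [hθ1, Nat.cast_one, one_smul] at hstat
    have : Fact (finrank ℝ (EuclideanSpace ℝ (Fin 2)) = 2) := ⟨finrank_euclideanSpace_fin⟩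
    exact Or.inr ⟨rfl, hθ1, exists_eq_neg_of_sum_fin_four_eq_zero hnorm hstat⟩
end

section
/- For all natural numbers k and m with k ≥ 3 and 1 ≤ m ≤ k − 1, one has 2·k·sin(m·π/k) ≥ 3·√3; in particular 2·k·sin(m·π/k) > 3·√2. -/
/-!
Since `sin` is symmetric about `π / 2` and increasing on `[0, π / 2]`, the smallest value of
`sin (m π / k)` for `1 ≤ m ≤ k - 1` is `sin (π / k)`. Concavity of `sin` on `[0, π]` puts
`sin (π / k)` above the chord from `0` to `π / 3`, i.e. `sin (π / k) ≥ (3 / k) · (√3 / 2)`,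
so the perimeter is at least `3√3`, the perimeter of the equilateral triangle.
-/

open Real

namespace Real

theorem mul_sin_le_sin_mul {t y : ℝ} (ht₀ : 0 ≤ t) (ht₁ : t ≤ 1) (hy₀ : 0 ≤ y) (hy : y ≤ π) :
    t * sin y ≤ sin (t * y) := by
  simpa using strictConcaveOn_sin_Icc.concaveOn.2 ⟨hy₀, hy⟩ ⟨le_rfl, pi_pos.le⟩
    ht₀ (sub_nonneg.2 ht₁) (add_sub_cancel t 1)

theorem sin_le_sin_of_le_of_le_pi_sub {a x : ℝ} (ha : 0 ≤ a) (hax : a ≤ x) (hxa : x ≤ π - a) :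
    sin a ≤ sin x := by
  rcases le_total x (π / 2) with hx | hx
  · exact sin_le_sin_of_le_of_le_pi_div_two (by linarith [pi_pos]) hx hax
  · rw [← sin_pi_sub x]
    exact sin_le_sin_of_le_of_le_pi_div_two (by linarith [pi_pos]) (by linarith) (by linarith)

theorem sin_pi_div_le_sin_mul_pi_div {k m : ℕ} (hm₁ : 1 ≤ m) (hmk : m < k) :
    sin (π / k) ≤ sin (m * π / k) := by
  have hk : (0 : ℝ) < k := Nat.cast_pos.2 (by omega)
  have hm₁' : (1 : ℝ) ≤ m := by exact_mod_cast hm₁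
  have hmk' : (m : ℝ) + 1 ≤ k := by exact_mod_cast hmk
  apply sin_le_sin_of_le_of_le_pi_sub (by positivity)
  · rw [mul_div_assoc]
    exact le_mul_of_one_le_left (by positivity) hm₁'
  · rw [div_le_iff₀ hk, sub_mul, div_mul_cancel₀ _ hk.ne']
    nlinarith [pi_pos]

theorem three_div_mul_sqrt_three_div_two_le_sin_pi_div {k : ℝ} (hk : 3 ≤ k) :
    3 / k * (√3 / 2) ≤ sin (π / k) := by
  have hk₀ : 0 < k := by linarith
  have h := mul_sin_le_sin_mul (t := 3 / k) (y := π / 3) (by positivity)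
    ((div_le_one hk₀).2 hk) (by positivity) (by linarith [pi_pos])
  have hangle : 3 / k * (π / 3) = π / k := by field_simp
  rwa [hangle, sin_pi_div_three] at h

end Real

/-- The perimeter `2 k sin (m π / k)` of a closed billiard trajectory in the unit disk
with `k ≥ 3` reflection points and winding number `1 ≤ m ≤ k - 1` is at least `3√3`;
in particular it is greater than `3√2`. -/
theorem billiard_perimeter_bound
    (k m : ℕ) (hk : 3 ≤ k) (hm1 : 1 ≤ m) (hm2 : m ≤ k - 1) :
    3 * Real.sqrt 3 ≤ 2 * k * Real.sin (m * Real.pi / k) ∧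
      3 * Real.sqrt 2 < 2 * k * Real.sin (m * Real.pi / k) := by
  have hk' : (3 : ℝ) ≤ k := by exact_mod_cast hk
  have hsin : 3 / k * (√3 / 2) ≤ sin (m * π / k) :=
    (three_div_mul_sqrt_three_div_two_le_sin_pi_div hk').trans
      (sin_pi_div_le_sin_mul_pi_div hm1 (by omega))
  have hbound : 3 * √3 ≤ 2 * k * sin (m * π / k) :=
    calc 3 * √3 = 2 * k * (3 / k * (√3 / 2)) := by field_simp
      _ ≤ 2 * k * sin (m * π / k) := by gcongr
  have hsqrt : √2 < √3 := sqrt_lt_sqrt (by norm_num) (by norm_num)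
  exact ⟨hbound, by linarith⟩
end

section
/- Let a > b > 0 be real numbers and let E = {p ∈ ℝ² : p₁²/a² + p₂²/b² = 1} be the ellipse with semi-axes a and b. Suppose P, Q ∈ E with P ≠ Q, and suppose the chord from P to Q is normal to E at both endpoints, i.e. (Q₁ − P₁)·(P₂/b²) = (Q₂ − P₂)·(P₁/a²) and (Q₁ − P₁)·(Q₂/b²) = (Q₂ − P₂)·(Q₁/a²). Then either P₂ = Q₂ = 0 (so {P, Q} = {(a,0), (−a,0)} is the major axis) or P₁ = Q₁ = 0 (so {P, Q} = {(0,b), (0,−b)} is the minor axis). -/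
/-!
Subtracting the two normality conditions leaves `(Q₀ - P₀) (Q₁ - P₁) (1/b² - 1/a²) = 0`, so for
`a ≠ b` a doubly normal chord is horizontal or vertical. A horizontal chord `Q - P = (t, 0)` with
`t ≠ 0` is normal at `P` only if `P₁ / b² = 0`, i.e. it lies on the major axis; symmetrically a
vertical chord lies on the minor axis.
-/

namespace DoublyNormalChord

variable {K : Type*} [Field K] {c d p₀ p₁ q₀ q₁ : K}

theorem sub_mul_sub_eq_zero (hcd : c ≠ d)
    (hp : (q₀ - p₀) * (p₁ / c) = (q₁ - p₁) * (p₀ / d))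
    (hq : (q₀ - p₀) * (q₁ / c) = (q₁ - p₁) * (q₀ / d)) :
    (q₀ - p₀) * (q₁ - p₁) = 0 := by
  have h : (q₀ - p₀) * (q₁ - p₁) * (c⁻¹ - d⁻¹) = 0 := by linear_combination hq - hp
  refine (mul_eq_zero.mp h).resolve_right ?_
  exact sub_ne_zero.mpr (inv_injective.ne hcd)

theorem eq_zero_of_horizontal (hc : c ≠ 0) (h₀ : q₀ ≠ p₀) (h₁ : q₁ = p₁)
    (hp : (q₀ - p₀) * (p₁ / c) = (q₁ - p₁) * (p₀ / d)) :
    p₁ = 0 ∧ q₁ = 0 := by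
  rw [h₁, sub_self, zero_mul, mul_eq_zero, div_eq_zero_iff] at hp
  have hp₁ : p₁ = 0 := (hp.resolve_left (sub_ne_zero.mpr h₀)).resolve_right hc
  exact ⟨hp₁, h₁.trans hp₁⟩

end DoublyNormalChord

theorem ellipse_doubly_normal_chord_general
    (a b : ℝ) (hb : 0 < b) (hab : b < a)
    (P Q : EuclideanSpace ℝ (Fin 2))
    (hPQ : P ≠ Q)
    (hnP : (Q 0 - P 0) * (P 1 / b ^ 2) = (Q 1 - P 1) * (P 0 / a ^ 2))
    (hnQ : (Q 0 - P 0) * (Q 1 / b ^ 2) = (Q 1 - P 1) * (Q 0 / a ^ 2)) :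
    (P 1 = 0 ∧ Q 1 = 0) ∨ (P 0 = 0 ∧ Q 0 = 0) := by
  have hP_ne_Q (h₀ : Q 0 = P 0) (h₁ : Q 1 = P 1) : False :=
    hPQ (PiLp.ext (Fin.forall_fin_two.mpr ⟨h₀.symm, h₁.symm⟩))
  have hba : b ^ 2 ≠ a ^ 2 := (pow_lt_pow_left₀ hab hb.le two_ne_zero).ne
  rcases mul_eq_zero.mp (DoublyNormalChord.sub_mul_sub_eq_zero hba hnP hnQ) with h₀ | h₁
  · have h₀ : Q 0 = P 0 := sub_eq_zero.mp h₀
    exact .inr (DoublyNormalChord.eq_zero_of_horizontal (pow_pos (hb.trans hab) 2).ne'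
      (hP_ne_Q h₀) h₀ hnP.symm)
  · have h₁ : Q 1 = P 1 := sub_eq_zero.mp h₁
    exact .inl (DoublyNormalChord.eq_zero_of_horizontal (pow_pos hb 2).ne'
      (fun h₀ ↦ hP_ne_Q h₀ h₁) h₁ hnP)

/-- The only chords of an ellipse with unequal semi-axes that are normal to the
ellipse at both endpoints are the major and the minor axes. -/
theorem ellipse_doubly_normal_chord
    (a b : ℝ) (hb : 0 < b) (hab : b < a)
    (P Q : EuclideanSpace ℝ (Fin 2))
    (hP : (P 0) ^ 2 / a ^ 2 + (P 1) ^ 2 / b ^ 2 = 1)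
    (hQ : (Q 0) ^ 2 / a ^ 2 + (Q 1) ^ 2 / b ^ 2 = 1)
    (hPQ : P ≠ Q)
    (hnP : (Q 0 - P 0) * (P 1 / b ^ 2) = (Q 1 - P 1) * (P 0 / a ^ 2))
    (hnQ : (Q 0 - P 0) * (Q 1 / b ^ 2) = (Q 1 - P 1) * (Q 0 / a ^ 2)) :
    (P 1 = 0 ∧ Q 1 = 0) ∨ (P 0 = 0 ∧ Q 0 = 0) :=
  ellipse_doubly_normal_chord_general a b hb hab P Q hPQ hnP hnQ
end

section
/- Let Q : ℝ² → ℝ be a polynomial function of total degree at most 2, Q(x, y) = c₀ + c₁x + c₂y + c₃x² + c₄xy + c₅y², with real coefficients not all zero. Then for every P ∈ ℝ² and every s > 0, H¹({z ∈ ℝ² : ‖z − P‖ < s and Q(z) = 0}) ≤ 4·π·s. -/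
/-!
Split the zero set of `Q` according to the signs `(σ, τ)` of the two partial derivatives.
Since `Q` is quadratic, `2 (Q p - Q q) = ⟨∇Q p + ∇Q q, p - q⟩`. Hence if two zeros `p, q` in
one piece satisfy `σ τ (p₀ - q₀) (p₁ - q₁) > 0`, both are critical points of `Q`, and then
`Q` vanishes only on the line through `p` and `q`. Either way each piece is a monotone graph,
`ε (p₀ - q₀) (p₁ - q₁) ≥ 0` for a fixed sign `ε`, so `z ↦ z₀ + ε z₁` does not decrease
distances on it and maps its part inside a ball of radius `s` into an interval of length
`2 √2 s`. The four pieces have total length at most `8 √2 s ≤ 4 π s`.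
-/

open MeasureTheory Set

local notation "ℝ²" => EuclideanSpace ℝ (Fin 2)

theorem hausdorffMeasure_le_image_of_edist_le {X Y : Type*} [EMetricSpace X] [MeasurableSpace X]
    [BorelSpace X] [EMetricSpace Y] [MeasurableSpace Y] [BorelSpace Y] {d : ℝ} (hd : 0 ≤ d)
    {f : X → Y} {T : Set X} (hf : ∀ p ∈ T, ∀ q ∈ T, edist p q ≤ edist (f p) (f q)) :
    μH[d] T ≤ μH[d] (f '' T) := by
  have hanti : AntilipschitzWith 1 (f ∘ ((↑) : T → X)) := fun p q => by
    simpa [Subtype.edist_eq] using hf p p.2 q q.2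
  calc μH[d] T = μH[d] (((↑) : T → X) '' univ) := by rw [image_univ, Subtype.range_coe]
    _ = μH[d] (univ : Set T) := isometry_subtype_coe.hausdorffMeasure_image (Or.inl hd) _
    _ ≤ μH[d] ((f ∘ ((↑) : T → X)) '' univ) := by
        simpa using hanti.le_hausdorffMeasure_image hd univ
    _ = μH[d] (f '' T) := by rw [image_comp, image_univ, Subtype.range_coe]

theorem EuclideanSpace.norm_sq_eq_fin_two (w : ℝ²) : ‖w‖ ^ 2 = w 0 ^ 2 + w 1 ^ 2 := by
  rw [EuclideanSpace.real_norm_sq_eq, Fin.sum_univ_two]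

def IsSignMonotone (ε : ℝ) (T : Set ℝ²) : Prop :=
  ∀ p ∈ T, ∀ q ∈ T, 0 ≤ ε * ((p 0 - q 0) * (p 1 - q 1))

theorem norm_sub_le_abs_of_nonneg_mul {ε : ℝ} (hε : |ε| = 1) {p q : ℝ²}
    (h : 0 ≤ ε * ((p 0 - q 0) * (p 1 - q 1))) :
    ‖p - q‖ ≤ |(p 0 + ε * p 1) - (q 0 + ε * q 1)| := by
  have hε2 : ε ^ 2 = 1 := by rw [← sq_abs, hε, one_pow]
  rw [← abs_norm]
  refine sq_le_sq.mp ?_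
  rw [EuclideanSpace.norm_sq_eq_fin_two, PiLp.sub_apply, PiLp.sub_apply]
  nlinarith

theorem abs_add_mul_le_sqrt_two_mul_norm {ε : ℝ} (hε : |ε| = 1) (w : ℝ²) :
    |w 0 + ε * w 1| ≤ √2 * ‖w‖ := by
  have hε2 : ε ^ 2 = 1 := by rw [← sq_abs, hε, one_pow]
  rw [← Real.sqrt_sq (norm_nonneg w), ← Real.sqrt_mul zero_le_two]
  apply Real.abs_le_sqrt
  rw [EuclideanSpace.norm_sq_eq_fin_two]
  nlinarith [sq_nonneg (ε * w 0 - w 1)]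

theorem IsSignMonotone.hausdorffMeasure_le {ε : ℝ} (hε : |ε| = 1) {T : Set ℝ²}
    (hT : IsSignMonotone ε T) {P : ℝ²} {s : ℝ} (hTP : T ⊆ Metric.ball P s) :
    μH[1] T ≤ ENNReal.ofReal (2 * (√2 * s)) := by
  set f : ℝ² → ℝ := fun z => z 0 + ε * z 1
  have himage : f '' T ⊆ Metric.ball (f P) (√2 * s) := by
    rintro _ ⟨z, hz, rfl⟩
    rw [Metric.mem_ball, Real.dist_eq]
    calc |f z - f P| = |(z - P) 0 + ε * (z - P) 1| := by
          simp only [f, PiLp.sub_apply]; ring_nf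
      _ ≤ √2 * ‖z - P‖ := abs_add_mul_le_sqrt_two_mul_norm hε _
      _ < √2 * s := by gcongr; exact mem_ball_iff_norm.mp (hTP hz)
  calc μH[1] T ≤ μH[1] (f '' T) := hausdorffMeasure_le_image_of_edist_le zero_le_one
        fun p hp q hq => by
          rw [edist_dist, edist_dist, Real.dist_eq, dist_eq_norm]
          exact ENNReal.ofReal_le_ofReal (norm_sub_le_abs_of_nonneg_mul hε (hT p hp q hq))
    _ ≤ μH[1] (Metric.ball (f P) (√2 * s)) := measure_mono himage
    _ = ENNReal.ofReal (2 * (√2 * s)) := by rw [hausdorffMeasure_real, Real.volume_ball]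

theorem eq_zero_of_add_mul_eq_zero {a b u v : ℝ} (ha : 0 ≤ a) (hb : 0 ≤ b) (huv : 0 < u * v)
    (h : a * u + b * v = 0) : a = 0 := by
  have : a * (u * v) = -(b * v ^ 2) := by linear_combination v * h
  nlinarith [mul_nonneg hb (sq_nonneg v)]

theorem nonneg_mul_of_mul_eq_mul {ε a b dx dy : ℝ} (hd : 0 < ε * (dx * dy))
    (h : a * dy = b * dx) : 0 ≤ ε * (a * b) := by
  refine nonneg_of_mul_nonneg_left ?_ hd
  have : ε * (a * b) * (ε * (dx * dy)) = (ε * (a * dy)) ^ 2 := by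
    linear_combination -ε ^ 2 * a * dy * h
  rw [this]
  positivity

section QuadraticPolynomial

variable (c₀ c₁ c₂ c₃ c₄ c₅ : ℝ)

def quadPoly (z : ℝ²) : ℝ :=
  c₀ + c₁ * z 0 + c₂ * z 1 + c₃ * z 0 ^ 2 + c₄ * (z 0 * z 1) + c₅ * z 1 ^ 2

def quadPolyDx (z : ℝ²) : ℝ := c₁ + 2 * c₃ * z 0 + c₄ * z 1

def quadPolyDy (z : ℝ²) : ℝ := c₂ + c₄ * z 0 + 2 * c₅ * z 1

def quadPolySignRegion (σ τ : ℝ) : Set ℝ² :=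
  {z | quadPoly c₀ c₁ c₂ c₃ c₄ c₅ z = 0 ∧ 0 ≤ σ * quadPolyDx c₁ c₃ c₄ z ∧
    0 ≤ τ * quadPolyDy c₂ c₄ c₅ z}

local notation "Q" => quadPoly c₀ c₁ c₂ c₃ c₄ c₅
local notation "Qx" => quadPolyDx c₁ c₃ c₄
local notation "Qy" => quadPolyDy c₂ c₄ c₅
local notation "R" => quadPolySignRegion c₀ c₁ c₂ c₃ c₄ c₅

theorem two_mul_quadPoly_sub (p q : ℝ²) :
    2 * (Q p - Q q) = (Qx p + Qx q) * (p 0 - q 0) + (Qy p + Qy q) * (p 1 - q 1) := by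
  unfold quadPoly quadPolyDx quadPolyDy; ring

variable {c₀ c₁ c₂ c₃ c₄ c₅}

theorem coeffs_eq_zero_of_critical_zero {p : ℝ²} (hp : Q p = 0) (hpx : Qx p = 0)
    (hpy : Qy p = 0) (hc₃ : c₃ = 0) (hc₄ : c₄ = 0) (hc₅ : c₅ = 0) :
    c₀ = 0 ∧ c₁ = 0 ∧ c₂ = 0 ∧ c₃ = 0 ∧ c₄ = 0 ∧ c₅ = 0 := by
  unfold quadPoly at hp; unfold quadPolyDx at hpx; unfold quadPolyDy at hpy
  have hc₁ : c₁ = 0 := by linear_combination hpx - 2 * p 0 * hc₃ - p 1 * hc₄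
  have hc₂ : c₂ = 0 := by linear_combination hpy - p 0 * hc₄ - 2 * p 1 * hc₅
  have hc₀ : c₀ = 0 := by
    linear_combination hp - p 0 * hc₁ - p 1 * hc₂ - p 0 ^ 2 * hc₃ - p 0 * p 1 * hc₄
      - p 1 ^ 2 * hc₅
  exact ⟨hc₀, hc₁, hc₂, hc₃, hc₄, hc₅⟩

theorem collinear_of_two_critical_zeros
    (hc : ¬(c₀ = 0 ∧ c₁ = 0 ∧ c₂ = 0 ∧ c₃ = 0 ∧ c₄ = 0 ∧ c₅ = 0))
    {p q : ℝ²} (hpq : p ≠ q) (hp : Q p = 0) (hpx : Qx p = 0) (hpy : Qy p = 0)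
    (hqx : Qx q = 0) (hqy : Qy q = 0) {r : ℝ²} (hr : Q r = 0) :
    (r 0 - p 0) * (q 1 - p 1) = (r 1 - p 1) * (q 0 - p 0) := by
  have hd : 0 < (q 0 - p 0) ^ 2 + (q 1 - p 1) ^ 2 := by
    rw [← PiLp.sub_apply, ← PiLp.sub_apply, ← EuclideanSpace.norm_sq_eq_fin_two]
    have : q - p ≠ 0 := sub_ne_zero.mpr hpq.symm
    positivity
  have h1 : 2 * c₃ * (q 0 - p 0) + c₄ * (q 1 - p 1) = 0 := by
    unfold quadPolyDx at hpx hqx; linear_combination hqx - hpx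
  have h2 : c₄ * (q 0 - p 0) + 2 * c₅ * (q 1 - p 1) = 0 := by
    unfold quadPolyDy at hpy hqy; linear_combination hqy - hpy
  set dx := q 0 - p 0
  set dy := q 1 - p 1
  set v0 := r 0 - p 0
  set v1 := r 1 - p 1
  -- Taylor expansion at the critical zero `p`; the Hessian has rank `≤ 1`, kernel `(dx, dy)`
  have key : (c₃ + c₅) * (v0 * dy - v1 * dx) ^ 2 = 0 := by
    unfold quadPoly at hr hp; unfold quadPolyDx at hpx; unfold quadPolyDy at hpy
    linear_combination (dx ^ 2 + dy ^ 2) * (hr - hp - v0 * hpx - v1 * hpy)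
      - (v0 ^ 2 - v1 ^ 2) * (dx / 2 * h1 - dy / 2 * h2) - v0 * v1 * (dy * h1 + dx * h2)
  rcases eq_or_ne (c₃ + c₅) 0 with h35 | h35
  · have hc₃ : c₃ = 0 := by
      have : c₃ * (dx ^ 2 + dy ^ 2) = 0 := by
        linear_combination (dx * h1 - dy * h2) / 2 + dy ^ 2 * h35
      exact (mul_eq_zero.mp this).resolve_right hd.ne'
    have hc₄ : c₄ = 0 := by
      have : c₄ * (dx ^ 2 + dy ^ 2) = 0 := by
        linear_combination dy * h1 + dx * h2 - 2 * dx * dy * h35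
      exact (mul_eq_zero.mp this).resolve_right hd.ne'
    have hc₅ : c₅ = 0 := by linear_combination h35 - hc₃
    exact absurd (coeffs_eq_zero_of_critical_zero hp hpx hpy hc₃ hc₄ hc₅) hc
  · have := pow_eq_zero_iff two_ne_zero |>.mp ((mul_eq_zero.mp key).resolve_left h35)
    linear_combination this

theorem gradient_eq_zero_of_mem_signRegion {σ τ : ℝ} {p q : ℝ²} (hp : p ∈ R σ τ)
    (hq : q ∈ R σ τ) (hpq : 0 < σ * τ * ((p 0 - q 0) * (p 1 - q 1))) :
    Qx p = 0 ∧ Qy p = 0 := by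
  obtain ⟨hQp, hxp, hyp⟩ := hp
  obtain ⟨hQq, hxq, hyq⟩ := hq
  have hσ : σ ≠ 0 := by rintro rfl; simp at hpq
  have hτ : τ ≠ 0 := by rintro rfl; simp at hpq
  have hmid := two_mul_quadPoly_sub c₀ c₁ c₂ c₃ c₄ c₅ p q
  have hx : σ * Qx p + σ * Qx q = 0 :=
    eq_zero_of_add_mul_eq_zero (add_nonneg hxp hxq) (add_nonneg hyp hyq)
      (u := τ * (p 0 - q 0)) (v := σ * (p 1 - q 1)) (by linarith)
      (by linear_combination σ * τ * (2 * hQp - 2 * hQq - hmid))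
  have hy : τ * Qy p + τ * Qy q = 0 :=
    eq_zero_of_add_mul_eq_zero (add_nonneg hyp hyq) (add_nonneg hxp hxq)
      (u := σ * (p 1 - q 1)) (v := τ * (p 0 - q 0)) (by linarith)
      (by linear_combination σ * τ * (2 * hQp - 2 * hQq - hmid))
  constructor
  · have : σ * Qx p = 0 := by linarith
    exact (mul_eq_zero.mp this).resolve_left hσ
  · have : τ * Qy p = 0 := by linarith
    exact (mul_eq_zero.mp this).resolve_left hτ

theorem exists_isSignMonotone_signRegion
    (hc : ¬(c₀ = 0 ∧ c₁ = 0 ∧ c₂ = 0 ∧ c₃ = 0 ∧ c₄ = 0 ∧ c₅ = 0))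
    {σ τ : ℝ} (hσ : |σ| = 1) (hτ : |τ| = 1) :
    ∃ ε : ℝ, |ε| = 1 ∧ IsSignMonotone ε (R σ τ) := by
  by_cases hgen : ∀ p ∈ R σ τ, ∀ q ∈ R σ τ, σ * τ * ((p 0 - q 0) * (p 1 - q 1)) ≤ 0
  · refine ⟨-(σ * τ), by rw [abs_neg, abs_mul, hσ, hτ, one_mul], fun p hp q hq => ?_⟩
    linarith [hgen p hp q hq]
  push Not at hgen
  obtain ⟨p, hp, q, hq, hpq⟩ := hgen
  obtain ⟨hpx, hpy⟩ := gradient_eq_zero_of_mem_signRegion hp hq hpq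
  obtain ⟨hqx, hqy⟩ := gradient_eq_zero_of_mem_signRegion hq hp (by linarith)
  have hpq_ne : p ≠ q := by rintro rfl; simp at hpq
  have hline r (hr : r ∈ R σ τ) :=
    collinear_of_two_critical_zeros hc hpq_ne hp.1 hpx hpy hqx hqy hr.1
  refine ⟨σ * τ, by rw [abs_mul, hσ, hτ, one_mul], fun r hr r' hr' => ?_⟩
  refine nonneg_mul_of_mul_eq_mul (dx := q 0 - p 0) (dy := q 1 - p 1) (by linarith) ?_
  linear_combination hline r hr - hline r' hr'

theorem setOf_quadPoly_eq_zero_subset_signRegions :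
    {z | Q z = 0} ⊆ (R 1 1 ∪ R 1 (-1)) ∪ (R (-1) 1 ∪ R (-1) (-1)) := by
  intro z hz
  rcases le_total 0 (Qx z) with hx | hx <;> rcases le_total 0 (Qy z) with hy | hy
  · exact .inl (.inl ⟨hz, by linarith, by linarith⟩)
  · exact .inl (.inr ⟨hz, by linarith, by linarith⟩)
  · exact .inr (.inl ⟨hz, by linarith, by linarith⟩)
  · exact .inr (.inr ⟨hz, by linarith, by linarith⟩)

theorem hausdorffMeasure_ball_inter_setOf_quadPoly_eq_zero_le
    (hc : ¬(c₀ = 0 ∧ c₁ = 0 ∧ c₂ = 0 ∧ c₃ = 0 ∧ c₄ = 0 ∧ c₅ = 0)) (P : ℝ²) (s : ℝ) :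
    μH[1] (Metric.ball P s ∩ {z | Q z = 0}) ≤ 4 * ENNReal.ofReal (2 * (√2 * s)) := by
  set B := Metric.ball P s
  have hpiece {σ τ : ℝ} (hσ : |σ| = 1) (hτ : |τ| = 1) :
      μH[1] (B ∩ R σ τ) ≤ ENNReal.ofReal (2 * (√2 * s)) :=
    let ⟨_, hε, hmono⟩ := exists_isSignMonotone_signRegion hc hσ hτ
    IsSignMonotone.hausdorffMeasure_le hε (fun p hp q hq => hmono p hp.2 q hq.2)
      inter_subset_left
  calc μH[1] (B ∩ {z | Q z = 0})
      ≤ μH[1] ((B ∩ R 1 1 ∪ B ∩ R 1 (-1)) ∪ (B ∩ R (-1) 1 ∪ B ∩ R (-1) (-1))) := by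
        simp only [← inter_union_distrib_left]
        exact measure_mono (inter_subset_inter_right B setOf_quadPoly_eq_zero_subset_signRegions)
    _ ≤ (μH[1] (B ∩ R 1 1) + μH[1] (B ∩ R 1 (-1))) +
          (μH[1] (B ∩ R (-1) 1) + μH[1] (B ∩ R (-1) (-1))) :=
        (measure_union_le _ _).trans (add_le_add (measure_union_le _ _) (measure_union_le _ _))
    _ ≤ (ENNReal.ofReal (2 * (√2 * s)) + ENNReal.ofReal (2 * (√2 * s))) +
          (ENNReal.ofReal (2 * (√2 * s)) + ENNReal.ofReal (2 * (√2 * s))) := by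
        gcongr <;> exact hpiece (by norm_num) (by norm_num)
    _ = 4 * ENNReal.ofReal (2 * (√2 * s)) := by ring

end QuadraticPolynomial

/-- Cauchy–Crofton bound for degree-two polynomials: the length of the zero set of a
nonzero polynomial of degree at most `2` inside any open ball of radius `s` is at most
`4 π s`. -/
theorem quadratic_zero_set_length_in_ball
    (c₀ c₁ c₂ c₃ c₄ c₅ : ℝ)
    (hc : ¬(c₀ = 0 ∧ c₁ = 0 ∧ c₂ = 0 ∧ c₃ = 0 ∧ c₄ = 0 ∧ c₅ = 0)) :
    ∀ (P : EuclideanSpace ℝ (Fin 2)) (s : ℝ), 0 < s →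
      μH[1] {z : EuclideanSpace ℝ (Fin 2) | ‖z - P‖ < s ∧
          c₀ + c₁ * z 0 + c₂ * z 1 + c₃ * (z 0) ^ 2 + c₄ * (z 0 * z 1)
            + c₅ * (z 1) ^ 2 = 0}
        ≤ ENNReal.ofReal (4 * Real.pi * s) := by
  intro P s _
  calc _ ≤ μH[1] (Metric.ball P s ∩ {z | quadPoly c₀ c₁ c₂ c₃ c₄ c₅ z = 0}) :=
        measure_mono fun z hz => ⟨mem_ball_iff_norm.mpr hz.1, hz.2⟩
    _ ≤ 4 * ENNReal.ofReal (2 * (√2 * s)) :=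
        hausdorffMeasure_ball_inter_setOf_quadPoly_eq_zero_le hc P s
    _ = ENNReal.ofReal (4 * (2 * √2) * s) := by
        rw [← ENNReal.ofReal_ofNat 4, ← ENNReal.ofReal_mul zero_le_four]; ring_nf
    _ ≤ ENNReal.ofReal (4 * Real.pi * s) := by
        gcongr
        linarith [Real.sqrt_two_lt_three_halves, Real.pi_gt_three]
end

section
/- There exists a real number a > 1 such that H¹({p ∈ B̄₁ : p₂ = a·p₁² − 1}) > 4. In other words, there is a polynomial of degree 2 in two variables whose zero set intersected with the closed unit disk has one-dimensional Hausdorff measure strictly greater than 4. -/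
/-!
A connected set has `H¹`-measure at least the distance between any two of its points (project
with the 1-Lipschitz map `dist · q`), so the length of a continuous injective arc is at least the
length of every inscribed polygon. For `a = 221` the parabola `y = a x² - 1` leaves the unit disk
at the rational points `(±21/221, 220/221)` (as `2a - 1 = 21²`), and already the polygon through
the abscissae `0, ±1/250, ±1/50, ±21/221` is longer than `4`.
-/

open MeasureTheory Set
open scoped ENNReal

section HausdorffLength

variable {X : Type*} [MetricSpace X] [MeasurableSpace X] [BorelSpace X]

theorem IsPreconnected.edist_le_hausdorffMeasure {s : Set X} (hs : IsPreconnected s) {p q : X}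
    (hp : p ∈ s) (hq : q ∈ s) : edist p q ≤ μH[1] s := by
  have hf : LipschitzWith 1 (dist · q) := LipschitzWith.dist_left q
  have hIcc : Icc 0 (dist p q) ⊆ (dist · q) '' s :=
    (hs.image _ hf.continuous.continuousOn).Icc_subset ⟨q, hq, dist_self q⟩ ⟨p, hp, rfl⟩
  calc edist p q = μH[1] (Icc 0 (dist p q)) := by
        rw [hausdorffMeasure_real, Real.volume_Icc, sub_zero, edist_dist]
    _ ≤ μH[1] ((dist · q) '' s) := measure_mono hIcc
    _ ≤ μH[1] s := by simpa using hf.hausdorffMeasure_image_le zero_le_one s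

theorem hausdorffMeasure_image_Icc_add_image_Icc {d : ℝ} (hd : 0 < d) {γ : ℝ → X}
    {a b c : ℝ} (hab : a ≤ b) (hbc : b ≤ c) (hγ : ContinuousOn γ (Icc a c))
    (hinj : InjOn γ (Icc a c)) :
    μH[d] (γ '' Icc a b) + μH[d] (γ '' Icc b c) = μH[d] (γ '' Icc a c) := by
  have := Measure.nullSingletonClass_hausdorff X hd
  have hbc_sub : Icc b c ⊆ Icc a c := Icc_subset_Icc_left hab
  have hcompact : IsCompact (γ '' Icc b c) :=
    isCompact_Icc.image_of_continuousOn (hγ.mono hbc_sub)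
  have hinter : γ '' Icc a b ∩ γ '' Icc b c ⊆ {γ b} := by
    rintro _ ⟨⟨x, hx, rfl⟩, ⟨y, hy, hxy⟩⟩
    obtain rfl : y = x := hinj (hbc_sub hy) (Icc_subset_Icc_right hbc hx) hxy
    rw [le_antisymm hx.2 hy.1]
    rfl
  rw [← measure_union₀ hcompact.isClosed.measurableSet.nullMeasurableSet
    (measure_mono_null hinter (measure_singleton _)), ← image_union, Icc_union_Icc_eq_Icc hab hbc]

theorem sum_edist_le_hausdorffMeasure_image_Icc {γ : ℝ → X} {n : ℕ} {x : Fin (n + 1) → ℝ}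
    (hx : Monotone x) (hγ : ContinuousOn γ (Icc (x 0) (x (Fin.last n))))
    (hinj : InjOn γ (Icc (x 0) (x (Fin.last n)))) :
    ∑ i : Fin n, edist (γ (x i.castSucc)) (γ (x i.succ)) ≤
      μH[1] (γ '' Icc (x 0) (x (Fin.last n))) := by
  induction n with
  | zero => simp
  | succ n ih =>
    set b := x (Fin.last n).castSucc
    have hab : x 0 ≤ b := hx (Fin.zero_le _)
    have hbc : b ≤ x (Fin.last (n + 1)) := hx (Fin.le_last _)
    have hinit := ih (x := x ∘ Fin.castSucc) (hx.comp Fin.strictMono_castSucc.monotone)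
      (hγ.mono (Icc_subset_Icc_right hbc)) (hinj.mono (Icc_subset_Icc_right hbc))
    have hlast : edist (γ b) (γ (x (Fin.last (n + 1)))) ≤
        μH[1] (γ '' Icc b (x (Fin.last (n + 1)))) :=
      (isPreconnected_Icc.image _ (hγ.mono (Icc_subset_Icc_left hab))).edist_le_hausdorffMeasure
        (mem_image_of_mem _ (left_mem_Icc.2 hbc)) (mem_image_of_mem _ (right_mem_Icc.2 hbc))
    rw [Fin.sum_univ_castSucc,
      ← hausdorffMeasure_image_Icc_add_image_Icc one_pos hab hbc hγ hinj]
    exact add_le_add hinit hlast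

end HausdorffLength

noncomputable def parabola (a x : ℝ) : EuclideanSpace ℝ (Fin 2) := !₂[x, a * x ^ 2 - 1]

@[simp] theorem parabola_apply_zero (a x : ℝ) : parabola a x 0 = x := rfl

@[simp] theorem parabola_apply_one (a x : ℝ) : parabola a x 1 = a * x ^ 2 - 1 := rfl

theorem continuous_parabola (a : ℝ) : Continuous (parabola a) := by
  unfold parabola
  fun_prop

theorem injective_parabola (a : ℝ) : Function.Injective (parabola a) :=
  fun x y h => by simpa using congrArg (· 0) h

theorem dist_parabola (a x y : ℝ) :
    dist (parabola a x) (parabola a y) = √((x - y) ^ 2 + (a * x ^ 2 - a * y ^ 2) ^ 2) := by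
  rw [EuclideanSpace.dist_eq, Fin.sum_univ_two]
  simp only [parabola_apply_zero, parabola_apply_one, Real.dist_eq, sq_abs,
    sub_sub_sub_cancel_right]

theorem le_dist_parabola {a x y c : ℝ}
    (h : c ^ 2 ≤ (x - y) ^ 2 + (a * x ^ 2 - a * y ^ 2) ^ 2) :
    c ≤ dist (parabola a x) (parabola a y) :=
  dist_parabola a x y ▸ Real.le_sqrt_of_sq_le h

theorem norm_parabola_le_one {a x : ℝ} (h : a ^ 2 * x ^ 2 ≤ 2 * a - 1) :
    ‖parabola a x‖ ≤ 1 := by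
  rw [EuclideanSpace.norm_eq, Real.sqrt_le_one, Fin.sum_univ_two]
  simp only [parabola_apply_zero, parabola_apply_one, Real.norm_eq_abs, sq_abs]
  nlinarith [sq_nonneg x]

theorem image_parabola_Icc_subset {a r : ℝ} (h : a ^ 2 * r ^ 2 ≤ 2 * a - 1) :
    parabola a '' Icc (-r) r ⊆
      {p : EuclideanSpace ℝ (Fin 2) | p ∈ Metric.closedBall 0 1 ∧ p 1 = a * p 0 ^ 2 - 1} := by
  rintro _ ⟨x, hx, rfl⟩
  refine ⟨mem_closedBall_zero_iff.2 (norm_parabola_le_one ?_), rfl⟩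
  calc a ^ 2 * x ^ 2 ≤ a ^ 2 * r ^ 2 :=
        mul_le_mul_of_nonneg_left (sq_le_sq' hx.1 hx.2) (sq_nonneg a)
    _ ≤ 2 * a - 1 := h

noncomputable def polygonAbscissae : Fin 7 → ℝ :=
  ![-(21 / 221), -(1 / 50), -(1 / 250), 0, 1 / 250, 1 / 50, 21 / 221]

theorem monotone_polygonAbscissae : Monotone polygonAbscissae := by
  rw [Fin.monotone_iff_le_succ]
  intro i
  fin_cases i <;> simp [polygonAbscissae] <;> norm_num

theorem four_lt_sum_dist_parabola_polygonAbscissae :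
    4 < ∑ i : Fin 6, dist (parabola 221 (polygonAbscissae i.castSucc))
      (parabola 221 (polygonAbscissae i.succ)) := by
  simp only [polygonAbscissae, Fin.sum_univ_six, Fin.reduceCastSucc, Fin.reduceSucc,
    Matrix.cons_val]
  linarith [le_dist_parabola (a := 221) (x := -(21 / 221)) (y := -(1 / 50)) (c := 1.90855)
      (by norm_num),
    le_dist_parabola (a := 221) (x := -(1 / 50)) (y := -(1 / 250)) (c := 0.08635) (by norm_num),
    le_dist_parabola (a := 221) (x := -(1 / 250)) (y := 0) (c := 0.00533) (by norm_num),
    le_dist_parabola (a := 221) (x := 0) (y := 1 / 250) (c := 0.00533) (by norm_num),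
    le_dist_parabola (a := 221) (x := 1 / 250) (y := 1 / 50) (c := 0.08635) (by norm_num),
    le_dist_parabola (a := 221) (x := 1 / 50) (y := 21 / 221) (c := 1.90855) (by norm_num)]

/-- There is a parabola `y = a x² − 1` (with `a > 1`) whose intersection with the
closed unit disk has length strictly greater than `4`. -/
theorem exists_parabola_length_gt_four :
    ∃ a : ℝ, 1 < a ∧
      (4 : ℝ≥0∞) < μH[1] {p : EuclideanSpace ℝ (Fin 2) |
        p ∈ Metric.closedBall 0 1 ∧ p 1 = a * (p 0) ^ 2 - 1} := by
  refine ⟨221, by norm_num, ?_⟩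
  calc (4 : ℝ≥0∞)
      < ENNReal.ofReal (∑ i : Fin 6, dist (parabola 221 (polygonAbscissae i.castSucc))
          (parabola 221 (polygonAbscissae i.succ))) := by
        simpa using four_lt_sum_dist_parabola_polygonAbscissae
    _ = ∑ i : Fin 6, edist (parabola 221 (polygonAbscissae i.castSucc))
          (parabola 221 (polygonAbscissae i.succ)) := by
        rw [ENNReal.ofReal_sum_of_nonneg fun _ _ => dist_nonneg]
        simp only [edist_dist]
    _ ≤ μH[1] (parabola 221 '' Icc (polygonAbscissae 0) (polygonAbscissae (Fin.last 6))) :=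
        sum_edist_le_hausdorffMeasure_image_Icc monotone_polygonAbscissae
          (continuous_parabola _).continuousOn (injective_parabola _).injOn
    _ ≤ _ := measure_mono (image_parabola_Icc_subset (by norm_num))
end

section
/- The function g : ℝ → ℝ defined by g(z) = 2·√(4z + 1)/√z − log(√(4z + 1) + 2·√z), where log is the natural logarithm, is strictly decreasing on the interval (0, ∞); indeed, for every z > 0 it has derivative g'(z) = −(z + z²)/(z^{5/2}·√(4z + 1)) < 0. -/
/-! With `s = √z` and `t = √(4z+1)`, so that `t² = 4s² + 1`, the two terms of `g` have the
derivatives `-1/(s³t)` and `1/(st)`; hence `g' = -(1 + s²)/(s³t) = -(z + z²)/(z^{5/2} t)`, which is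
negative on `(0, ∞)`, and the mean value theorem gives strict monotonicity. -/

open Real

namespace SignFunction

noncomputable def g (z : ℝ) : ℝ :=
  2 * √(4 * z + 1) / √z - log (√(4 * z + 1) + 2 * √z)

theorem hasDerivAt_sqrt_affine {a b x : ℝ} (hx : a * x + b ≠ 0) :
    HasDerivAt (fun y => √(a * y + b)) (a / (2 * √(a * x + b))) x :=
  (((hasDerivAt_id x).const_mul a).add_const b).sqrt (by simpa using hx) |>.congr_deriv (by simp)

variable {z : ℝ}

theorem hasDerivAt_sqrt_four_mul_add_one (hz : 0 < z) :
    HasDerivAt (fun y => √(4 * y + 1)) (2 / √(4 * z + 1)) z :=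
  (hasDerivAt_sqrt_affine (by linarith)).congr_deriv (by ring)

theorem hasDerivAt_div_sqrt (hz : 0 < z) :
    HasDerivAt (fun y => 2 * √(4 * y + 1) / √y) (-1 / (√z ^ 3 * √(4 * z + 1))) z := by
  have hs : 0 < √z := sqrt_pos.mpr hz
  refine (((hasDerivAt_sqrt_four_mul_add_one hz).const_mul 2).fun_div (hasDerivAt_sqrt hz.ne')
    hs.ne').congr_deriv ?_
  have hs2 : √z ^ 2 = z := sq_sqrt hz.le
  have ht2 : √(4 * z + 1) ^ 2 = 4 * z + 1 := sq_sqrt (by linarith)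
  field_simp
  linear_combination 4 * hs2 - ht2

theorem hasDerivAt_log_sqrt_add (hz : 0 < z) :
    HasDerivAt (fun y => log (√(4 * y + 1) + 2 * √y)) (1 / (√z * √(4 * z + 1))) z := by
  refine (((hasDerivAt_sqrt_four_mul_add_one hz).fun_add
    ((hasDerivAt_sqrt hz.ne').const_mul 2)).log (by positivity)).congr_deriv ?_
  field_simp
  ring

noncomputable def g' (z : ℝ) : ℝ :=
  -(z + z ^ 2) / (z ^ ((5 : ℝ) / 2) * √(4 * z + 1))

theorem hasDerivAt_g (hz : 0 < z) : HasDerivAt g (g' z) z := by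
  have h52 : z ^ ((5 : ℝ) / 2) = √z ^ 5 := by
    rw [rpow_div_two_eq_sqrt _ hz.le]
    norm_cast
  refine ((hasDerivAt_div_sqrt hz).fun_sub (hasDerivAt_log_sqrt_add hz)).congr_deriv ?_
  rw [g', h52]
  field_simp
  linear_combination -(1 + √z ^ 2 + z) * sq_sqrt hz.le

theorem g'_neg (hz : 0 < z) : g' z < 0 :=
  div_neg_of_neg_of_pos (by nlinarith) (by positivity)

theorem strictAntiOn_g : StrictAntiOn g (Set.Ioi 0) := by
  refine strictAntiOn_of_hasDerivWithinAt_neg (f' := g') (convex_Ioi 0)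
    (fun x hx => (hasDerivAt_g hx).continuousAt.continuousWithinAt) ?_ ?_ <;>
    rw [interior_Ioi]
  · exact fun x hx => (hasDerivAt_g hx).hasDerivWithinAt
  · exact fun x hx => g'_neg hx

end SignFunction

/-- The function `g(z) = 2√(4z+1)/√z − log(√(4z+1) + 2√z)` is strictly decreasing on
`(0, ∞)`, with derivative `−(z + z²)/(z^{5/2} √(4z+1)) < 0` at every `z > 0`. -/
theorem sign_function_strictAnti :
    StrictAntiOn (fun z : ℝ =>
        2 * Real.sqrt (4 * z + 1) / Real.sqrt z
          - Real.log (Real.sqrt (4 * z + 1) + 2 * Real.sqrt z)) (Set.Ioi 0) ∧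
    ∀ z : ℝ, 0 < z →
      HasDerivAt (fun z : ℝ =>
          2 * Real.sqrt (4 * z + 1) / Real.sqrt z
            - Real.log (Real.sqrt (4 * z + 1) + 2 * Real.sqrt z))
        (-(z + z ^ 2) / (z ^ ((5 : ℝ) / 2) * Real.sqrt (4 * z + 1))) z ∧
      -(z + z ^ 2) / (z ^ ((5 : ℝ) / 2) * Real.sqrt (4 * z + 1)) < 0 :=
  ⟨SignFunction.strictAntiOn_g,
    fun _ hz => ⟨SignFunction.hasDerivAt_g hz, SignFunction.g'_neg hz⟩⟩
end

section
/- Let α, β > 0 be real numbers, let f : ℝ² → ℝ² be a surjective isometry (rigid motion), and let H := f''({p ∈ ℝ² : p₁²/α² − p₂²/β² = 1}) be the image of the hyperbola with semi-axes α, β. Suppose that both branches meet the closed unit disk, i.e. f''({p : p₁²/α² − p₂²/β² = 1 and p₁ ≥ α}) ∩ B̄₁ ≠ ∅ and f''({p : p₁²/α² − p₂²/β² = 1 and p₁ ≤ −α}) ∩ B̄₁ ≠ ∅. Then H¹(H ∩ B̄₁) ≤ 4. -/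
/-!
Parametrize the two branches by the second coordinate, `y ↦ (±g y, y)` with
`g y = √(α² + (α y / β)²)`. As `g` is `m`-Lipschitz for `m = |α / β|`, both parametrizations are
`√(1 + m²)`-Lipschitz; as `g y ≥ m |y|`, points of opposite branches at heights `y` and `z` are at
distance at least `√(1 + m²) |y - z|`. Pull the disk back along the isometry and let `I`, `J` be the
(nonempty) sets of heights at which the two branches lie in it. Then `|y - z| ≤ 2 / √(1 + m²)` for
`y ∈ I`, `z ∈ J`, which forces `|I| + |J| ≤ 4 / √(1 + m²)`, so the length is at most
`√(1 + m²) (|I| + |J|) ≤ 4`.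
-/

open MeasureTheory Metric Set
open scoped ENNReal NNReal

theorem Real.volume_add_volume_le_of_forall_abs_sub_le {I J : Set ℝ} (hI : I.Nonempty)
    (hJ : J.Nonempty) {D : ℝ} (h : ∀ y ∈ I, ∀ z ∈ J, |y - z| ≤ D) :
    volume I + volume J ≤ ENNReal.ofReal (2 * D) := by
  obtain ⟨y₀, hy₀⟩ := hI
  obtain ⟨z₀, hz₀⟩ := hJ
  have hIb : Bornology.IsBounded I :=
    (isBounded_closedBall (x := z₀) (r := D)).subset fun y hy => by
      simpa [Real.dist_eq] using h y hy z₀ hz₀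
  have hJb : Bornology.IsBounded J :=
    (isBounded_closedBall (x := y₀) (r := D)).subset fun z hz => by
      simpa [Real.dist_eq, abs_sub_comm] using h y₀ hy₀ z hz
  -- `diam I + diam J = (sSup I - sInf J) + (sSup J - sInf I)`
  have hIJ : sSup I - sInf J ≤ D := by
    have : sSup I ≤ sInf J + D := csSup_le ⟨y₀, hy₀⟩ fun y hy =>
      sub_le_iff_le_add.1 <| le_csInf ⟨z₀, hz₀⟩ fun z hz => by
        linarith [(abs_le.1 (h y hy z hz)).2]
    linarith
  have hJI : sSup J - sInf I ≤ D := by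
    have : sSup J ≤ sInf I + D := csSup_le ⟨z₀, hz₀⟩ fun z hz =>
      sub_le_iff_le_add.1 <| le_csInf ⟨y₀, hy₀⟩ fun y hy => by
        linarith [(abs_le.1 (h y hy z hz)).1]
    linarith
  calc volume I + volume J ≤ ediam I + ediam J :=
        add_le_add (Real.volume_le_diam I) (Real.volume_le_diam J)
    _ = ENNReal.ofReal ((sSup I - sInf I) + (sSup J - sInf J)) := by
        rw [Real.ediam_eq hIb, Real.ediam_eq hJb, ENNReal.ofReal_add
          (sub_nonneg.2 (Real.sInf_le_sSup I hIb.bddBelow hIb.bddAbove))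
          (sub_nonneg.2 (Real.sInf_le_sSup J hJb.bddBelow hJb.bddAbove))]
    _ ≤ ENNReal.ofReal (2 * D) := ENNReal.ofReal_le_ofReal (by linarith)

theorem hausdorffMeasure_one_range_union_range_inter_le {E : Type*} [MetricSpace E]
    [MeasurableSpace E] [BorelSpace E] {F G : ℝ → E} {K : ℝ≥0} (hK : 0 < K)
    (hF : LipschitzWith K F) (hG : LipschitzWith K G)
    (hFG : ∀ y z, K * dist y z ≤ dist (F y) (G z)) {B : Set E} (hB : Bornology.IsBounded B)
    (hFB : (F ⁻¹' B).Nonempty) (hGB : (G ⁻¹' B).Nonempty) :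
    μH[1] ((range F ∪ range G) ∩ B) ≤ ENNReal.ofReal (2 * diam B) := by
  have himage {H : ℝ → E} (hH : LipschitzWith K H) (s : Set ℝ) :
      μH[1] (H '' s) ≤ K * volume s := by
    simpa [hausdorffMeasure_real] using hH.hausdorffMeasure_image_le zero_le_one s
  have hsep : ∀ y ∈ F ⁻¹' B, ∀ z ∈ G ⁻¹' B, |y - z| ≤ diam B / K := fun y hy z hz =>
    (le_div_iff₀' (NNReal.coe_pos.2 hK)).2 <| (hFG y z).trans (dist_le_diam_of_mem hB hy hz)
  calc μH[1] ((range F ∪ range G) ∩ B)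
      = μH[1] (F '' (F ⁻¹' B) ∪ G '' (G ⁻¹' B)) := by
        rw [union_inter_distrib_right, image_preimage_eq_range_inter,
          image_preimage_eq_range_inter]
    _ ≤ K * volume (F ⁻¹' B) + K * volume (G ⁻¹' B) :=
        (measure_union_le _ _).trans (add_le_add (himage hF _) (himage hG _))
    _ ≤ K * ENNReal.ofReal (2 * (diam B / K)) := by
        rw [← mul_add]
        gcongr
        exact Real.volume_add_volume_le_of_forall_abs_sub_le hFB hGB hsep
    _ = ENNReal.ofReal (2 * diam B) := by
        rw [← ENNReal.ofReal_coe_nnreal, ← ENNReal.ofReal_mul K.coe_nonneg]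
        congr 1
        field_simp

theorem EuclideanSpace.dist_vecTwo (a b c d : ℝ) :
    dist !₂[a, b] !₂[c, d] = √((a - c) ^ 2 + (b - d) ^ 2) := by
  simp [EuclideanSpace.dist_eq, Fin.sum_univ_two, Real.dist_eq, sq_abs]

theorem LipschitzWith.graph {g : ℝ → ℝ} {m : ℝ≥0} (hg : LipschitzWith m g) :
    LipschitzWith (NNReal.sqrt (1 + m ^ 2)) fun y => !₂[g y, y] := by
  refine LipschitzWith.of_dist_le_mul fun y z => ?_
  have hgyz : (g y - g z) ^ 2 ≤ m ^ 2 * (y - z) ^ 2 := by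
    simpa [Real.dist_eq, mul_pow, sq_abs] using
      pow_le_pow_left₀ dist_nonneg (hg.dist_le_mul y z) 2
  calc dist !₂[g y, y] !₂[g z, z] = √((g y - g z) ^ 2 + (y - z) ^ 2) :=
        EuclideanSpace.dist_vecTwo _ _ _ _
    _ ≤ √((1 + m ^ 2) * (y - z) ^ 2) := Real.sqrt_le_sqrt (by linarith)
    _ = NNReal.sqrt (1 + m ^ 2) * dist y z := by
        rw [Real.sqrt_mul (by positivity), Real.sqrt_sq_eq_abs, Real.coe_sqrt, Real.dist_eq]
        push_cast
        rfl

theorem sqrt_one_add_sq_mul_dist_le_dist_graph_neg {g : ℝ → ℝ} {m : ℝ≥0}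
    (hg : ∀ y, m * |y| ≤ g y) (y z : ℝ) :
    NNReal.sqrt (1 + m ^ 2) * dist y z ≤ dist !₂[g y, y] !₂[-g z, z] := by
  have hsum : m * |y - z| ≤ g y + g z := by
    calc (m : ℝ) * |y - z| ≤ m * (|y| + |z|) := by gcongr; exact abs_sub _ _
      _ ≤ g y + g z := by linarith [hg y, hg z]
  rw [EuclideanSpace.dist_vecTwo, sub_neg_eq_add, Real.le_sqrt (by positivity) (by positivity),
    Real.coe_sqrt, mul_pow, Real.sq_sqrt (by positivity), Real.dist_eq, sq_abs]
  have := pow_le_pow_left₀ (by positivity) hsum 2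
  rw [mul_pow, sq_abs] at this
  push_cast
  linarith

theorem lipschitzWith_sqrt_sq_add_sq (a : ℝ) : LipschitzWith 1 fun t : ℝ => √(a ^ 2 + t ^ 2) := by
  refine LipschitzWith.of_dist_le_mul fun s t => ?_
  simp only [← Complex.norm_add_mul_I, Real.dist_eq, NNReal.coe_one, one_mul]
  calc |‖(a : ℂ) + s * Complex.I‖ - ‖(a : ℂ) + t * Complex.I‖|
      ≤ ‖((a : ℂ) + s * Complex.I) - ((a : ℂ) + t * Complex.I)‖ := abs_norm_sub_norm_le _ _
    _ = |s - t| := by simp [← sub_mul, ← Complex.ofReal_sub]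

noncomputable def hyperbolaAbscissa (α β y : ℝ) : ℝ := √(α ^ 2 + (α / β * y) ^ 2)

theorem lipschitzWith_hyperbolaAbscissa (α β : ℝ) :
    LipschitzWith ‖α / β‖₊ (hyperbolaAbscissa α β) :=
  one_mul ‖α / β‖₊ ▸ (lipschitzWith_sqrt_sq_add_sq α).comp (lipschitzWith_smul (α / β))

theorem nnnorm_mul_abs_le_hyperbolaAbscissa (α β y : ℝ) :
    ‖α / β‖₊ * |y| ≤ hyperbolaAbscissa α β y := by
  calc (‖α / β‖₊ : ℝ) * |y| = √((α / β * y) ^ 2) := by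
        rw [Real.sqrt_sq_eq_abs, abs_mul, coe_nnnorm, Real.norm_eq_abs]
    _ ≤ hyperbolaAbscissa α β y := Real.sqrt_le_sqrt (le_add_of_nonneg_left (sq_nonneg α))

theorem hyperbolaAbscissa_eq_abs {α β : ℝ} (hα : α ≠ 0) {x y : ℝ}
    (h : x ^ 2 / α ^ 2 - y ^ 2 / β ^ 2 = 1) : hyperbolaAbscissa α β y = |x| := by
  have hx : x ^ 2 = α ^ 2 + (α / β * y) ^ 2 := by
    have : x ^ 2 = α ^ 2 * (1 + y ^ 2 / β ^ 2) := by
      rw [← h]; field_simp; ring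
    rw [this]; ring
  rw [hyperbolaAbscissa, ← hx, Real.sqrt_sq_eq_abs]

theorem vecTwo_hyperbolaAbscissa_eq_of_nonneg {α β : ℝ} (hα : α ≠ 0)
    {p : EuclideanSpace ℝ (Fin 2)} (hp : p 0 ^ 2 / α ^ 2 - p 1 ^ 2 / β ^ 2 = 1) (h0 : 0 ≤ p 0) :
    !₂[hyperbolaAbscissa α β (p 1), p 1] = p := by
  rw [hyperbolaAbscissa_eq_abs hα hp, abs_of_nonneg h0]
  ext i; fin_cases i <;> rfl

theorem vecTwo_neg_hyperbolaAbscissa_eq_of_nonpos {α β : ℝ} (hα : α ≠ 0)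
    {p : EuclideanSpace ℝ (Fin 2)} (hp : p 0 ^ 2 / α ^ 2 - p 1 ^ 2 / β ^ 2 = 1) (h0 : p 0 ≤ 0) :
    !₂[-hyperbolaAbscissa α β (p 1), p 1] = p := by
  rw [hyperbolaAbscissa_eq_abs hα hp, abs_of_nonpos h0, neg_neg]
  ext i; fin_cases i <;> rfl

theorem hyperbola_subset_range_union_range {α β : ℝ} (hα : α ≠ 0) :
    {p : EuclideanSpace ℝ (Fin 2) | p 0 ^ 2 / α ^ 2 - p 1 ^ 2 / β ^ 2 = 1} ⊆
      range (fun y => !₂[hyperbolaAbscissa α β y, y]) ∪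
        range (fun y => !₂[-hyperbolaAbscissa α β y, y]) := by
  intro p hp
  rcases le_total 0 (p 0) with h0 | h0
  · exact Or.inl ⟨p 1, vecTwo_hyperbolaAbscissa_eq_of_nonneg hα hp h0⟩
  · exact Or.inr ⟨p 1, vecTwo_neg_hyperbolaAbscissa_eq_of_nonpos hα hp h0⟩

theorem hyperbola_two_branches_length_le_four_general
    (α β : ℝ) (hα : 0 < α)
    (f : EuclideanSpace ℝ (Fin 2) → EuclideanSpace ℝ (Fin 2))
    (hf : Isometry f) (hfs : Function.Surjective f)
    (hbr1 : (f '' {p : EuclideanSpace ℝ (Fin 2) |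
        (p 0) ^ 2 / α ^ 2 - (p 1) ^ 2 / β ^ 2 = 1 ∧ α ≤ p 0}
      ∩ Metric.closedBall 0 1).Nonempty)
    (hbr2 : (f '' {p : EuclideanSpace ℝ (Fin 2) |
        (p 0) ^ 2 / α ^ 2 - (p 1) ^ 2 / β ^ 2 = 1 ∧ p 0 ≤ -α}
      ∩ Metric.closedBall 0 1).Nonempty) :
    μH[1] (f '' {p : EuclideanSpace ℝ (Fin 2) |
        (p 0) ^ 2 / α ^ 2 - (p 1) ^ 2 / β ^ 2 = 1}
      ∩ Metric.closedBall 0 1) ≤ 4 := by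
  obtain ⟨c, hc⟩ := hfs 0
  have hball : f ⁻¹' closedBall 0 1 = closedBall c 1 := hc ▸ hf.preimage_closedBall c 1
  rw [← image_inter_preimage, hball] at hbr1 hbr2 ⊢
  rw [hf.hausdorffMeasure_image (Or.inr hfs)]
  obtain ⟨_, ⟨p, ⟨⟨hp, hp0⟩, hpc⟩, rfl⟩⟩ := hbr1
  obtain ⟨_, ⟨q, ⟨⟨hq, hq0⟩, hqc⟩, rfl⟩⟩ := hbr2
  have hg := lipschitzWith_hyperbolaAbscissa α β
  calc _ ≤ μH[1] ((range (fun y => !₂[hyperbolaAbscissa α β y, y]) ∪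
          range (fun y => !₂[-hyperbolaAbscissa α β y, y])) ∩ closedBall c 1) :=
        measure_mono (inter_subset_inter_left _ (hyperbola_subset_range_union_range hα.ne'))
    _ ≤ ENNReal.ofReal (2 * diam (closedBall c 1)) :=
        hausdorffMeasure_one_range_union_range_inter_le (by positivity) hg.graph hg.neg.graph
          (sqrt_one_add_sq_mul_dist_le_dist_graph_neg (nnnorm_mul_abs_le_hyperbolaAbscissa α β))
          isBounded_closedBall
          ⟨p 1, by
            rwa [mem_preimage, vecTwo_hyperbolaAbscissa_eq_of_nonneg hα.ne' hp (by linarith)]⟩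
          ⟨q 1, by
            rwa [mem_preimage, Pi.neg_apply,
              vecTwo_neg_hyperbolaAbscissa_eq_of_nonpos hα.ne' hq (by linarith)]⟩
    _ ≤ 4 := by
        rw [← ENNReal.ofReal_ofNat 4]
        gcongr
        linarith [diam_closedBall (x := c) zero_le_one]

/-- If both branches of a hyperbola meet the closed unit disk, then the length of the
hyperbola restricted to the closed unit disk is at most `4`. -/
theorem hyperbola_two_branches_length_le_four
    (α β : ℝ) (hα : 0 < α) (hβ : 0 < β)
    (f : EuclideanSpace ℝ (Fin 2) → EuclideanSpace ℝ (Fin 2))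
    (hf : Isometry f) (hfs : Function.Surjective f)
    (hbr1 : (f '' {p : EuclideanSpace ℝ (Fin 2) |
        (p 0) ^ 2 / α ^ 2 - (p 1) ^ 2 / β ^ 2 = 1 ∧ α ≤ p 0}
      ∩ Metric.closedBall 0 1).Nonempty)
    (hbr2 : (f '' {p : EuclideanSpace ℝ (Fin 2) |
        (p 0) ^ 2 / α ^ 2 - (p 1) ^ 2 / β ^ 2 = 1 ∧ p 0 ≤ -α}
      ∩ Metric.closedBall 0 1).Nonempty) :
    μH[1] (f '' {p : EuclideanSpace ℝ (Fin 2) |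
        (p 0) ^ 2 / α ^ 2 - (p 1) ^ 2 / β ^ 2 = 1}
      ∩ Metric.closedBall 0 1) ≤ 4 :=
  hyperbola_two_branches_length_le_four_general α β hα f hf hfs hbr1 hbr2
end
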